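/- arXiv:1703.07863 — 6 statements merged into one kernel-verified Lean document; each statement's English description precedes it below -/
import Mathlib

section
/- The function $D_0$ is convex on $(0,\infty)$: for all $U_1, U_2 > 0$ and $\lambda \in [0,1]$, $D_0(\lambda U_1 + (1-\lambda) U_2) \le \lambda D_0(U_1) + (1-\lambda) D_0(U_2)$. -/
/-!
With `h y = y * |y|`, the difference of the two half-line integrals is `∫ h (U - ξ) φ(ξ) dξ` for
the Gaussian `φ`. As `φ` is even, this equals half of `∫ (h (U - ξ) + h (U + ξ)) φ(ξ) dξ`, and for
`U ≥ 0` the bracket is `4 |ξ| U + 2 ((U - |ξ|)₊)²`, a convex function of `U`. A nonnegative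
average of convex functions is convex.
-/

open MeasureTheory Real

noncomputable def D0 (β₀ C₀ U : ℝ) : ℝ :=
  C₀ * ((∫ ξ in Set.Iio U, (ξ - U) ^ 2 * Real.exp (-(β₀ * ξ ^ 2))) -
        ∫ ξ in Set.Ioi U, (ξ - U) ^ 2 * Real.exp (-(β₀ * ξ ^ 2)))

open Set

theorem convexOn_integral {α E : Type*} [MeasurableSpace α] {μ : Measure α} [AddCommGroup E]
    [Module ℝ E] {s : Set E} {f : E → α → ℝ} (hs : Convex ℝ s)
    (hconv : ∀ᵐ a ∂μ, ConvexOn ℝ s (f · a)) (hint : ∀ x ∈ s, Integrable (f x) μ) :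
    ConvexOn ℝ s fun x => ∫ a, f x a ∂μ := by
  refine ⟨hs, fun x hx y hy p q hp hq hpq => ?_⟩
  have hxi := hint x hx
  have hyi := hint y hy
  calc ∫ a, f (p • x + q • y) a ∂μ ≤ ∫ a, (p * f x a + q * f y a) ∂μ :=
        integral_mono_ae (hint _ (hs hx hy hp hq hpq)) ((hxi.const_mul p).add (hyi.const_mul q))
          (hconv.mono fun a ha => ha.2 hx hy hp hq hpq)
    _ = p • ∫ a, f x a ∂μ + q • ∫ a, f y a ∂μ := by
        rw [integral_add (hxi.const_mul p) (hyi.const_mul q), integral_const_mul,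
          integral_const_mul, smul_eq_mul, smul_eq_mul]

theorem integrable_mul_exp_neg_mul_sq_of_abs_le {β : ℝ} (hβ : 0 < β) {g : ℝ → ℝ}
    (hg : Continuous g) {a b : ℝ} (hbound : ∀ ξ, |g ξ| ≤ a + b * ξ ^ 2) :
    Integrable fun ξ => g ξ * exp (-(β * ξ ^ 2)) := by
  have hexp : Integrable fun ξ : ℝ => exp (-(β * ξ ^ 2)) := by
    simpa only [neg_mul] using integrable_exp_neg_mul_sq hβ
  have hsq : Integrable fun ξ : ℝ => ξ ^ 2 * exp (-(β * ξ ^ 2)) := by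
    simpa only [rpow_two, neg_mul] using
      integrable_rpow_mul_exp_neg_mul_sq hβ (s := 2) (by norm_num)
  refine ((hexp.const_mul a).add (hsq.const_mul b)).mono'
    (by fun_prop : Continuous _).aestronglyMeasurable (Filter.Eventually.of_forall fun ξ => ?_)
  rw [norm_mul, norm_of_nonneg (exp_pos _).le, norm_eq_abs, Pi.add_apply]
  nlinarith [mul_le_mul_of_nonneg_right (hbound ξ) (exp_pos (-(β * ξ ^ 2))).le]

def signedSq (y : ℝ) : ℝ := y * |y|

lemma continuous_signedSq : Continuous signedSq := by
  unfold signedSq; fun_prop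

lemma abs_signedSq (y : ℝ) : |signedSq y| = y ^ 2 := by
  rw [signedSq, abs_mul, abs_abs, ← sq, sq_abs]

lemma signedSq_of_nonneg {y : ℝ} (hy : 0 ≤ y) : signedSq y = y ^ 2 := by
  rw [signedSq, abs_of_nonneg hy, sq]

lemma signedSq_of_nonpos {y : ℝ} (hy : y ≤ 0) : signedSq y = -y ^ 2 := by
  rw [signedSq, abs_of_nonpos hy, sq, mul_neg]

lemma integrable_signedSq_sub_mul_exp_neg_mul_sq {β : ℝ} (hβ : 0 < β) (U : ℝ) :
    Integrable fun ξ => signedSq (U - ξ) * exp (-(β * ξ ^ 2)) :=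
  integrable_mul_exp_neg_mul_sq_of_abs_le hβ (continuous_signedSq.comp (by fun_prop))
    (a := 2 * U ^ 2) (b := 2) fun ξ => by
      rw [abs_signedSq]; nlinarith [sq_nonneg (U + ξ)]

lemma integrable_signedSq_add_mul_exp_neg_mul_sq {β : ℝ} (hβ : 0 < β) (U : ℝ) :
    Integrable fun ξ => signedSq (U + ξ) * exp (-(β * ξ ^ 2)) := by
  simpa only [sub_neg_eq_add, even_two, Even.neg_pow] using
    (integrable_signedSq_sub_mul_exp_neg_mul_sq hβ U).comp_neg

lemma D0_eq_integral_signedSq {β : ℝ} (hβ : 0 < β) (C U : ℝ) :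
    D0 β C U = C * ∫ ξ, signedSq (U - ξ) * exp (-(β * ξ ^ 2)) := by
  have hint := integrable_signedSq_sub_mul_exp_neg_mul_sq hβ U
  have hIio : ∫ ξ in Iio U, signedSq (U - ξ) * exp (-(β * ξ ^ 2)) =
      ∫ ξ in Iio U, (ξ - U) ^ 2 * exp (-(β * ξ ^ 2)) :=
    setIntegral_congr_fun measurableSet_Iio fun ξ hξ => by
      rw [signedSq_of_nonneg (sub_nonneg.2 (le_of_lt hξ)), ← neg_sub, neg_sq]
  have hIoi : ∫ ξ in Ioi U, signedSq (U - ξ) * exp (-(β * ξ ^ 2)) =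
      -∫ ξ in Ioi U, (ξ - U) ^ 2 * exp (-(β * ξ ^ 2)) := by
    rw [← integral_neg]
    exact setIntegral_congr_fun measurableSet_Ioi fun ξ hξ => by
      rw [signedSq_of_nonpos (sub_nonpos.2 (le_of_lt hξ)), ← neg_sub, neg_sq, neg_mul]
  rw [D0, ← integral_add_compl measurableSet_Iio hint, compl_Iio, integral_Ici_eq_integral_Ioi,
    hIio, hIoi, sub_eq_add_neg]

def dragKernel (U ξ : ℝ) : ℝ := signedSq (U - ξ) + signedSq (U + ξ)

lemma dragKernel_abs (U ξ : ℝ) : dragKernel U |ξ| = dragKernel U ξ := by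
  rcases abs_choice ξ with h | h <;> rw [h]
  rw [dragKernel, dragKernel, sub_neg_eq_add, ← sub_eq_add_neg, add_comm]

lemma dragKernel_eq_of_nonneg {U a : ℝ} (hU : 0 ≤ U) (ha : 0 ≤ a) :
    dragKernel U a = 4 * a * U + 2 * max (U - a) 0 ^ 2 := by
  rcases le_total U a with h | h
  · rw [dragKernel, signedSq_of_nonpos (by linarith), signedSq_of_nonneg (by linarith),
      max_eq_right (by linarith)]
    ring
  · rw [dragKernel, signedSq_of_nonneg (by linarith), signedSq_of_nonneg (by linarith),
      max_eq_left (by linarith)]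
    ring

lemma convexOn_dragKernel (ξ : ℝ) : ConvexOn ℝ (Ici 0) (dragKernel · ξ) := by
  have hpos : ConvexOn ℝ (Ici 0) fun U : ℝ => max (U - |ξ|) 0 :=
    ((convexOn_id (convex_Ici 0)).add_const (-|ξ|)).sup (convexOn_const 0 (convex_Ici 0))
  have := ((convexOn_id (convex_Ici 0)).smul (by positivity : (0 : ℝ) ≤ 4 * |ξ|)).add
    ((hpos.pow (fun _ _ => le_max_right _ _) 2).smul (by norm_num : (0 : ℝ) ≤ 2))
  refine this.congr fun U hU => ?_
  simp [← dragKernel_abs U ξ, dragKernel_eq_of_nonneg (mem_Ici.1 hU) (abs_nonneg ξ), sub_eq_add_neg]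

lemma D0_eq_integral_dragKernel {β : ℝ} (hβ : 0 < β) (C U : ℝ) :
    D0 β C U = C / 2 * ∫ ξ, dragKernel U ξ * exp (-(β * ξ ^ 2)) := by
  have hint := integrable_signedSq_sub_mul_exp_neg_mul_sq hβ U
  have hint' := integrable_signedSq_add_mul_exp_neg_mul_sq hβ U
  have hsymm : ∫ ξ, signedSq (U + ξ) * exp (-(β * ξ ^ 2)) =
      ∫ ξ, signedSq (U - ξ) * exp (-(β * ξ ^ 2)) := by
    rw [← integral_neg_eq_self]
    simp only [neg_sq, ← sub_eq_add_neg]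
  simp only [dragKernel, add_mul]
  rw [integral_add hint hint', hsymm, D0_eq_integral_signedSq hβ]
  ring

lemma convexOn_D0 {β C : ℝ} (hβ : 0 < β) (hC : 0 ≤ C) : ConvexOn ℝ (Ici 0) (D0 β C) := by
  have hint (U : ℝ) : Integrable fun ξ => dragKernel U ξ * exp (-(β * ξ ^ 2)) := by
    simp only [dragKernel, add_mul]
    exact (integrable_signedSq_sub_mul_exp_neg_mul_sq hβ U).add
      (integrable_signedSq_add_mul_exp_neg_mul_sq hβ U)
  have hconv : ConvexOn ℝ (Ici 0) fun U => ∫ ξ, dragKernel U ξ * exp (-(β * ξ ^ 2)) :=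
    convexOn_integral (convex_Ici 0) (Filter.Eventually.of_forall fun ξ =>
      ((convexOn_dragKernel ξ).smul (exp_pos (-(β * ξ ^ 2))).le).congr fun U _ =>
        mul_comm _ _) fun U _ => hint U
  exact (hconv.smul (by positivity : 0 ≤ C / 2)).congr fun U _ =>
    (D0_eq_integral_dragKernel hβ C U).symm

/-- `D₀` is convex on `(0, ∞)`. -/
theorem D0_convex (β₀ C₀ : ℝ) (hβ₀ : 0 < β₀) (hC₀ : 0 < C₀) :
    ∀ U₁ U₂ : ℝ, 0 < U₁ → 0 < U₂ → ∀ lam : ℝ, 0 ≤ lam → lam ≤ 1 →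
      D0 β₀ C₀ (lam * U₁ + (1 - lam) * U₂) ≤
        lam * D0 β₀ C₀ U₁ + (1 - lam) * D0 β₀ C₀ U₂ := by
  intro U₁ U₂ hU₁ hU₂ lam hlam₀ hlam₁
  exact (convexOn_D0 hβ₀ hC₀.le).2 (mem_Ici.2 hU₁.le) (mem_Ici.2 hU₂.le) hlam₀
    (sub_nonneg.2 hlam₁) (add_sub_cancel lam 1)
end

section
/- The function $D_0$ is differentiable on $[0,\infty)$ and there exists a constant $C_1 > 0$ (depending only on $\beta_0$ and $C_0$) such that $D_0'(U) \ge C_1$ for all $U \ge 0$; consequently $D_0(U) \ge C_1 U$ for all $U \ge 0$, i.e. $D_0$ grows at least linearly. -/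
open MeasureTheory Real

/-!
With `g ξ = exp (-β₀ ξ²)`, the two half-line integrals combine into
`D₀ U = C₀ ∫ φ (U - ξ) g ξ dξ` with `φ t = t |t|`. Since `φ' t = 2 |t|`, differentiating under the
integral gives `D₀' U = 2 C₀ ∫ |U - ξ| g ξ dξ`. As `g` is even, this equals
`C₀ ∫ (|U - ξ| + |U + ξ|) g ξ dξ ≥ 2 C₀ ∫ |ξ| g ξ dξ =: C₁ > 0` for every `U`. Finally `D₀` is odd,
so `D₀ 0 = 0`, and the mean value inequality gives `D₀ U ≥ C₁ U` for `U ≥ 0`.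
-/

open Set Filter

lemma hasDerivAt_mul_abs (t : ℝ) : HasDerivAt (fun s : ℝ ↦ s * |s|) (2 * |t|) t := by
  have off_zero : ∀ y ≠ (0 : ℝ), HasDerivAt (fun s : ℝ ↦ s * |s|) (2 * |y|) y := by
    intro y hy
    rcases hy.lt_or_gt with hy | hy
    · refine (((hasDerivAt_id y).mul (hasDerivAt_id y)).neg.congr_of_eventuallyEq ?_).congr_deriv ?_
      · filter_upwards [Iio_mem_nhds hy] with s (hs : s < 0)
        simp [abs_of_neg hs]
      · simp only [id_eq, one_mul, mul_one, abs_of_neg hy]; ring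
    · refine (((hasDerivAt_id y).mul (hasDerivAt_id y)).congr_of_eventuallyEq ?_).congr_deriv ?_
      · filter_upwards [Ioi_mem_nhds hy] with s (hs : 0 < s)
        simp [abs_of_pos hs]
      · simp only [id_eq, one_mul, mul_one, abs_of_pos hy]; ring
  rcases eq_or_ne t 0 with rfl | ht
  · exact hasDerivAt_of_hasDerivAt_of_ne off_zero (by fun_prop) (by fun_prop)
  · exact off_zero t ht

section Weight

variable {w : ℝ → ℝ}

lemma integrable_sub_sq_mul (hw₀ : Integrable w) (hw₁ : Integrable fun ξ ↦ ξ * w ξ)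
    (hw₂ : Integrable fun ξ ↦ ξ ^ 2 * w ξ) (U : ℝ) :
    Integrable fun ξ ↦ (U - ξ) ^ 2 * w ξ := by
  refine (((hw₀.const_mul (U ^ 2)).sub (hw₁.const_mul (2 * U))).add hw₂).congr
    (ae_of_all _ fun ξ ↦ ?_)
  simp only [Pi.add_apply, Pi.sub_apply]
  ring

lemma integrable_abs_sub_mul (hw₀ : Integrable w) (hw₁ : Integrable fun ξ ↦ ξ * w ξ) (U : ℝ) :
    Integrable fun ξ ↦ |U - ξ| * w ξ := by
  refine Integrable.mono' ((hw₀.norm.const_mul |U|).add hw₁.norm)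
    ((continuous_const.sub continuous_id).abs.aestronglyMeasurable.mul hw₀.1) ?_
  refine ae_of_all _ fun ξ ↦ ?_
  simp only [norm_mul, norm_abs_eq_norm, Real.norm_eq_abs, Pi.add_apply]
  nlinarith [abs_sub U ξ, abs_nonneg (w ξ)]

lemma integrable_mul_abs_sub_mul (hw₀ : Integrable w) (hw₁ : Integrable fun ξ ↦ ξ * w ξ)
    (hw₂ : Integrable fun ξ ↦ ξ ^ 2 * w ξ) (U : ℝ) :
    Integrable fun ξ ↦ (U - ξ) * |U - ξ| * w ξ := by
  refine (integrable_sub_sq_mul hw₀ hw₁ hw₂ U).mono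
    (((continuous_const.sub continuous_id).mul
      (continuous_const.sub continuous_id).abs).aestronglyMeasurable.mul hw₀.1) ?_
  refine ae_of_all _ fun ξ ↦ ?_
  simp [← sq]

lemma integral_Iio_sub_integral_Ioi_eq_integral_mul_abs (hw₀ : Integrable w)
    (hw₁ : Integrable fun ξ ↦ ξ * w ξ) (hw₂ : Integrable fun ξ ↦ ξ ^ 2 * w ξ) (U : ℝ) :
    (∫ ξ in Iio U, (ξ - U) ^ 2 * w ξ) - ∫ ξ in Ioi U, (ξ - U) ^ 2 * w ξ =
      ∫ ξ, (U - ξ) * |U - ξ| * w ξ := by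
  have hint := integrable_mul_abs_sub_mul hw₀ hw₁ hw₂ U
  rw [← intervalIntegral.integral_Iio_add_Ici hint.integrableOn hint.integrableOn,
    integral_Ici_eq_integral_Ioi, sub_eq_add_neg, ← integral_neg]
  congr 1
  · refine setIntegral_congr_fun measurableSet_Iio fun ξ (hξ : ξ < U) ↦ ?_
    rw [abs_of_pos (sub_pos.2 hξ)]; ring
  · refine setIntegral_congr_fun measurableSet_Ioi fun ξ (hξ : U < ξ) ↦ ?_
    rw [abs_of_neg (sub_neg.2 hξ)]; ring

lemma hasDerivAt_integral_mul_abs_sub_mul (hw₀ : Integrable w)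
    (hw₁ : Integrable fun ξ ↦ ξ * w ξ) (hw₂ : Integrable fun ξ ↦ ξ ^ 2 * w ξ) (U : ℝ) :
    HasDerivAt (fun U ↦ ∫ ξ, (U - ξ) * |U - ξ| * w ξ) (2 * ∫ ξ, |U - ξ| * w ξ) U := by
  rw [← integral_const_mul]
  refine (hasDerivAt_integral_of_dominated_loc_of_deriv_le (Metric.ball_mem_nhds U one_pos)
    (Eventually.of_forall fun V ↦ (integrable_mul_abs_sub_mul hw₀ hw₁ hw₂ V).1)
    (integrable_mul_abs_sub_mul hw₀ hw₁ hw₂ U)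
    (F' := fun V ξ ↦ 2 * (|V - ξ| * w ξ))
    ((integrable_abs_sub_mul hw₀ hw₁ U).1.const_mul 2)
    (bound := fun ξ ↦ 2 * ((|U| + 1) * |w ξ| + |ξ * w ξ|)) ?_
    (((hw₀.norm.const_mul (|U| + 1)).add hw₁.norm).const_mul 2) ?_).2
  · refine ae_of_all _ fun ξ V (hV : dist V U < 1) ↦ ?_
    rw [Real.dist_eq] at hV
    simp only [norm_mul, Real.norm_eq_abs, abs_abs, abs_two, abs_mul]
    have : |V - ξ| ≤ |U| + 1 + |ξ| := by
      have := abs_sub V ξ; have := abs_sub_abs_le_abs_sub V U; linarith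
    nlinarith [abs_nonneg (w ξ), abs_nonneg ξ]
  · refine ae_of_all _ fun ξ V _ ↦ ?_
    have := ((hasDerivAt_mul_abs (V - ξ)).comp V ((hasDerivAt_id V).sub_const ξ)).mul_const (w ξ)
    simpa [mul_assoc] using this

lemma integral_abs_mul_le_integral_abs_sub_mul (hw_even : ∀ ξ, w (-ξ) = w ξ) (hw_nonneg : 0 ≤ w)
    (hw₀ : Integrable w) (hw₁ : Integrable fun ξ ↦ ξ * w ξ) (U : ℝ) :
    ∫ ξ, |ξ| * w ξ ≤ ∫ ξ, |U - ξ| * w ξ := by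
  have reflect : ∫ ξ, |U + ξ| * w ξ = ∫ ξ, |U - ξ| * w ξ := by
    rw [← integral_neg_eq_self]
    simp [hw_even, sub_eq_add_neg]
  have hint := integrable_abs_sub_mul hw₀ hw₁ U
  have hint' : Integrable fun ξ ↦ |U + ξ| * w ξ := by
    simpa [sub_neg_eq_add, hw_even] using (integrable_abs_sub_mul hw₀ hw₁ U).comp_neg
  have hint₀ : Integrable fun ξ ↦ |ξ| * w ξ := by simpa using integrable_abs_sub_mul hw₀ hw₁ 0
  have triangle : ∫ ξ, 2 * (|ξ| * w ξ) ≤ ∫ ξ, (|U - ξ| * w ξ + |U + ξ| * w ξ) := by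
    refine integral_mono (hint₀.const_mul 2) (hint.add hint') fun ξ ↦ ?_
    have := abs_sub (U + ξ) (U - ξ)
    simp only [add_sub_sub_cancel, ← two_mul, abs_mul, abs_two] at this
    nlinarith [mul_le_mul_of_nonneg_right this (hw_nonneg ξ)]
  rw [integral_const_mul, integral_add hint hint', reflect] at triangle
  linarith

lemma integral_mul_abs_mul_eq_zero (hw_even : ∀ ξ, w (-ξ) = w ξ) :
    ∫ ξ, ξ * |ξ| * w ξ = 0 := by
  have h := integral_neg_eq_self (fun ξ ↦ ξ * |ξ| * w ξ) volume
  simp only [abs_neg, hw_even, neg_mul, integral_neg] at h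
  linarith

end Weight

section Gaussian

variable {β : ℝ}

lemma integrable_pow_mul_exp_neg_mul_sq (hβ : 0 < β) (n : ℕ) :
    Integrable fun ξ : ℝ ↦ ξ ^ n * exp (-(β * ξ ^ 2)) := by
  simpa [neg_mul, Real.rpow_natCast] using
    integrable_rpow_mul_exp_neg_mul_sq hβ (s := n) (by linarith [n.cast_nonneg (α := ℝ)])

lemma integral_abs_mul_exp_neg_mul_sq_pos (hβ : 0 < β) :
    0 < ∫ ξ : ℝ, |ξ| * exp (-(β * ξ ^ 2)) := by
  have hint : Integrable fun ξ : ℝ ↦ |ξ| * exp (-(β * ξ ^ 2)) := by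
    simpa using (integrable_pow_mul_exp_neg_mul_sq hβ 1).norm
  rw [integral_pos_iff_support_of_nonneg (fun ξ ↦ by positivity) hint]
  have hsupp : Function.support (fun ξ : ℝ ↦ |ξ| * exp (-(β * ξ ^ 2))) = {0}ᶜ := by
    ext ξ; simp
  rw [hsupp]
  exact isOpen_compl_singleton.measure_pos volume ⟨1, one_ne_zero⟩

lemma integrable_moments_exp_neg_mul_sq (hβ : 0 < β) :
    (Integrable fun ξ : ℝ ↦ exp (-(β * ξ ^ 2))) ∧ (Integrable fun ξ : ℝ ↦ ξ * exp (-(β * ξ ^ 2))) ∧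
      Integrable fun ξ : ℝ ↦ ξ ^ 2 * exp (-(β * ξ ^ 2)) :=
  ⟨by simpa using integrable_pow_mul_exp_neg_mul_sq hβ 0,
    by simpa using integrable_pow_mul_exp_neg_mul_sq hβ 1, integrable_pow_mul_exp_neg_mul_sq hβ 2⟩

lemma D0_eq_integral_mul_abs (hβ : 0 < β) (C U : ℝ) :
    D0 β C U = C * ∫ ξ, (U - ξ) * |U - ξ| * exp (-(β * ξ ^ 2)) := by
  obtain ⟨h₀, h₁, h₂⟩ := integrable_moments_exp_neg_mul_sq hβ
  rw [D0, integral_Iio_sub_integral_Ioi_eq_integral_mul_abs h₀ h₁ h₂]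

lemma hasDerivAt_D0 (hβ : 0 < β) (C U : ℝ) :
    HasDerivAt (D0 β C) (C * (2 * ∫ ξ, |U - ξ| * exp (-(β * ξ ^ 2)))) U := by
  obtain ⟨h₀, h₁, h₂⟩ := integrable_moments_exp_neg_mul_sq hβ
  rw [funext (D0_eq_integral_mul_abs hβ C)]
  exact (hasDerivAt_integral_mul_abs_sub_mul h₀ h₁ h₂ U).const_mul C

lemma D0_zero (hβ : 0 < β) (C : ℝ) : D0 β C 0 = 0 := by
  have h := integral_mul_abs_mul_eq_zero (w := fun ξ ↦ exp (-(β * ξ ^ 2))) (by simp)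
  simp [D0_eq_integral_mul_abs hβ, integral_neg, h]

lemma integral_abs_mul_exp_neg_mul_sq_le (hβ : 0 < β) (U : ℝ) :
    ∫ ξ, |ξ| * exp (-(β * ξ ^ 2)) ≤ ∫ ξ, |U - ξ| * exp (-(β * ξ ^ 2)) := by
  obtain ⟨h₀, h₁, -⟩ := integrable_moments_exp_neg_mul_sq hβ
  exact integral_abs_mul_le_integral_abs_sub_mul (by simp) (fun ξ ↦ (exp_pos _).le) h₀ h₁ U

end Gaussian

/-- `D₀` is differentiable on `[0, ∞)` with derivative bounded below by a positive
constant `C₁` (depending only on `β₀` and `C₀`); consequently `D₀(U) ≥ C₁ U`,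
i.e. `D₀` grows at least linearly. -/
theorem D0_deriv_lower_bound (β₀ C₀ : ℝ) (hβ₀ : 0 < β₀) (hC₀ : 0 < C₀) :
    ∃ C₁ : ℝ, 0 < C₁ ∧ ∃ D0' : ℝ → ℝ,
      (∀ U : ℝ, 0 ≤ U →
        HasDerivWithinAt (D0 β₀ C₀) (D0' U) (Set.Ici 0) U) ∧
      (∀ U : ℝ, 0 ≤ U → C₁ ≤ D0' U) ∧
      (∀ U : ℝ, 0 ≤ U → C₁ * U ≤ D0 β₀ C₀ U) := by
  set g : ℝ → ℝ := fun ξ ↦ exp (-(β₀ * ξ ^ 2))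
  have hC₁ : 0 < C₀ * (2 * ∫ ξ, |ξ| * g ξ) := by
    have := integral_abs_mul_exp_neg_mul_sq_pos hβ₀
    positivity
  have deriv_ge (U : ℝ) : C₀ * (2 * ∫ ξ, |ξ| * g ξ) ≤ C₀ * (2 * ∫ ξ, |U - ξ| * g ξ) := by
    have := integral_abs_mul_exp_neg_mul_sq_le hβ₀ U
    gcongr
  refine ⟨_, hC₁, _, fun U _ ↦ (hasDerivAt_D0 hβ₀ C₀ U).hasDerivWithinAt,
    fun U _ ↦ deriv_ge U, fun U hU ↦ ?_⟩
  have := mul_sub_le_image_sub_of_le_deriv (fun x ↦ (hasDerivAt_D0 hβ₀ C₀ x).differentiableAt)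
    (fun x ↦ (hasDerivAt_D0 hβ₀ C₀ x).deriv ▸ deriv_ge x) hU
  simpa [D0_zero hβ₀] using this
end

section
/- Let $d \ge 3$. There exists a constant $C > 0$, depending only on $C_+$ and $d$, such that the following holds: for every $W \in \Omega(\gamma, L, A_*, B_*, V_\infty)$, every $t > 0$, every $s \in (0, t/2]$, and every real number $\xi_1$ satisfying $\xi_1 = \langle W \rangle_{s,t}$ and $\xi_1 < W(t)$, one has $0 < W(t) - \xi_1 \le \frac{C}{1+t}(\gamma + \gamma^3 A_*) + L^{-(d-1)} \frac{B_*}{1 + t/L}$. -/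
open MeasureTheory Real

/-- Time average `⟨W⟩_{s,t} = (t-s)⁻¹ ∫_s^t W(σ) dσ`. -/
noncomputable def avg (W : ℝ → ℝ) (s t : ℝ) : ℝ :=
  (t - s)⁻¹ * ∫ σ in s..t, W σ

/-- The class `Ω(γ, L, A_*, B_*, V∞)` (with decay rates `C₊ ≤ C₋`):
Lipschitz functions `W : [0,∞) → [V∞/2, V∞)` with `W(0) = V₀ = V∞ - γ` satisfying
the two-sided decay estimates of the paper. -/
def memOmega (d : ℕ) (γ L A B Vinf Cp Cm : ℝ) (W : ℝ → ℝ) : Prop :=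
  (∃ K : NNReal, LipschitzOnWith K W (Set.Ici 0)) ∧
  W 0 = Vinf - γ ∧
  (∀ t : ℝ, 0 ≤ t → Vinf / 2 ≤ W t ∧ W t < Vinf) ∧
  (∀ t : ℝ, 0 ≤ t → Vinf - W t ≤
    γ * Real.exp (-Cp * t) + γ ^ 3 * (A / (1 + t) ^ (d + 2)) +
      B / (L ^ (d - 1) * (1 + t / L) ^ (d - 1))) ∧
  (∀ t : ℝ, 0 ≤ t → γ * Real.exp (-Cm * t) ≤ Vinf - W t)

/-!
Write `W(t) - ⟨W⟩_{s,t} = ⟨W(t) - W⟩_{s,t} ≤ ⟨V∞ - W⟩_{s,t}`. For `d ≥ 3` every term of the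
upper bound defining `Ω` is dominated by a multiple of one of the profiles `(1 + σ/c)⁻²` with
`c = 1` or `c = L` (the exponential because `e^y ≥ (1 + y)²/2`), and the average of such a
profile over `[s, t]` is exactly `((1 + s/c)(1 + t/c))⁻¹ ≤ (1 + t/c)⁻¹`.
-/

section Average

variable {f g : ℝ → ℝ} {s t : ℝ}

lemma avg_const (c : ℝ) (hst : s ≠ t) : avg (fun _ => c) s t = c := by
  rw [avg, intervalIntegral.integral_const, smul_eq_mul, ← mul_assoc,
    inv_mul_cancel₀ (sub_ne_zero.2 hst.symm), one_mul]

lemma avg_sub (hf : IntervalIntegrable f volume s t) (hg : IntervalIntegrable g volume s t) :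
    avg (fun σ => f σ - g σ) s t = avg f s t - avg g s t := by
  rw [avg, avg, avg, intervalIntegral.integral_sub hf hg, mul_sub]

lemma avg_add (hf : IntervalIntegrable f volume s t) (hg : IntervalIntegrable g volume s t) :
    avg (fun σ => f σ + g σ) s t = avg f s t + avg g s t := by
  rw [avg, avg, avg, intervalIntegral.integral_add hf hg, mul_add]

lemma avg_const_mul (a : ℝ) : avg (fun σ => a * f σ) s t = a * avg f s t := by
  rw [avg, avg, intervalIntegral.integral_const_mul, mul_left_comm]

lemma avg_mono_on (hst : s ≤ t) (hf : IntervalIntegrable f volume s t)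
    (hg : IntervalIntegrable g volume s t) (h : ∀ σ ∈ Set.Icc s t, f σ ≤ g σ) :
    avg f s t ≤ avg g s t :=
  mul_le_mul_of_nonneg_left (intervalIntegral.integral_mono_on hst hf hg h)
    (inv_nonneg.2 (sub_nonneg.2 hst))

end Average

section Profile

variable {c s t : ℝ}

lemma continuousOn_inv_one_add_div_sq (hc : 0 < c) :
    ContinuousOn (fun σ : ℝ => ((1 + σ / c) ^ 2)⁻¹) (Set.Ici 0) :=
  (by fun_prop : Continuous fun σ : ℝ => (1 + σ / c) ^ 2).continuousOn.inv₀
    fun σ (hσ : 0 ≤ σ) => by positivity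

lemma intervalIntegrable_inv_one_add_div_sq (hc : 0 < c) (hs : 0 ≤ s) (ht : 0 ≤ t) :
    IntervalIntegrable (fun σ : ℝ => ((1 + σ / c) ^ 2)⁻¹) volume s t :=
  ((continuousOn_inv_one_add_div_sq hc).mono
    fun _ hσ => (le_min hs ht).trans hσ.1).intervalIntegrable

lemma hasDerivAt_neg_mul_inv_one_add_div (hc : 0 < c) {σ : ℝ} (hσ : 0 ≤ σ) :
    HasDerivAt (fun x : ℝ => -c * (1 + x / c)⁻¹) ((1 + σ / c) ^ 2)⁻¹ σ := by
  have hne : 1 + σ / c ≠ 0 := by positivity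
  have hlin : HasDerivAt (fun x : ℝ => 1 + x / c) (1 / c) σ := by
    simpa using ((hasDerivAt_id σ).div_const c).const_add 1
  exact ((hlin.inv hne).const_mul (-c)).congr_deriv (by field_simp)

lemma avg_inv_one_add_div_sq (hc : 0 < c) (hs : 0 ≤ s) (ht : 0 ≤ t) (hst : s ≠ t) :
    avg (fun σ => ((1 + σ / c) ^ 2)⁻¹) s t = ((1 + s / c) * (1 + t / c))⁻¹ := by
  have hderiv : ∀ σ ∈ Set.uIcc s t,
      HasDerivAt (fun x : ℝ => -c * (1 + x / c)⁻¹) ((1 + σ / c) ^ 2)⁻¹ σ :=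
    fun σ hσ => hasDerivAt_neg_mul_inv_one_add_div hc (le_min hs ht |>.trans hσ.1)
  rw [avg, intervalIntegral.integral_eq_sub_of_hasDerivAt hderiv
    (intervalIntegrable_inv_one_add_div_sq hc hs ht)]
  have : t - s ≠ 0 := sub_ne_zero.2 hst.symm
  field_simp
  ring

lemma avg_inv_one_add_div_sq_le (hc : 0 < c) (hs : 0 ≤ s) (hst : s < t) :
    avg (fun σ => ((1 + σ / c) ^ 2)⁻¹) s t ≤ (1 + t / c)⁻¹ := by
  have ht : 0 ≤ t := hs.trans hst.le
  rw [avg_inv_one_add_div_sq hc hs ht hst.ne]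
  gcongr
  exact le_mul_of_one_le_left (by positivity) (le_add_of_nonneg_right (by positivity))

end Profile

lemma avg_le_of_le_inv_one_add_sq {f : ℝ → ℝ} {a b c s t : ℝ} (ha : 0 ≤ a) (hb : 0 ≤ b)
    (hc : 0 < c) (hs : 0 ≤ s) (hst : s < t) (hf : IntervalIntegrable f volume s t)
    (h : ∀ σ ∈ Set.Icc s t, f σ ≤ a * ((1 + σ) ^ 2)⁻¹ + b * ((1 + σ / c) ^ 2)⁻¹) :
    avg f s t ≤ a * (1 + t)⁻¹ + b * (1 + t / c)⁻¹ := by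
  have ht : 0 ≤ t := hs.trans hst.le
  have hint₁ := (intervalIntegrable_inv_one_add_div_sq one_pos hs ht).const_mul a
  have hint₂ := (intervalIntegrable_inv_one_add_div_sq hc hs ht).const_mul b
  have havg₁ := avg_inv_one_add_div_sq_le one_pos hs hst
  simp only [div_one] at hint₁ havg₁
  calc avg f s t ≤ avg (fun σ => a * ((1 + σ) ^ 2)⁻¹ + b * ((1 + σ / c) ^ 2)⁻¹) s t :=
        avg_mono_on hst.le hf (hint₁.add hint₂) h
    _ = a * avg (fun σ => ((1 + σ) ^ 2)⁻¹) s t + b * avg (fun σ => ((1 + σ / c) ^ 2)⁻¹) s t := by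
        rw [avg_add hint₁ hint₂, avg_const_mul, avg_const_mul]
    _ ≤ a * (1 + t)⁻¹ + b * (1 + t / c)⁻¹ := by
        gcongr
        exact avg_inv_one_add_div_sq_le hc hs hst

lemma exp_neg_mul_le_inv_one_add_sq {c x : ℝ} (hc : 0 < c) (hx : 0 ≤ x) :
    exp (-c * x) ≤ 2 / min 1 c ^ 2 * ((1 + x) ^ 2)⁻¹ := by
  set m := min 1 c
  have hm : 0 < m := lt_min one_pos hc
  have hlin : m * (1 + x) ≤ 1 + c * x := by
    nlinarith [min_le_left 1 c, min_le_right 1 c]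
  have hquad : (1 + c * x) ^ 2 ≤ 2 * exp (c * x) := by
    nlinarith [quadratic_le_exp_of_nonneg (mul_nonneg hc.le hx)]
  rw [← div_eq_mul_inv, div_div, le_div_iff₀ (by positivity)]
  calc exp (-c * x) * (m ^ 2 * (1 + x) ^ 2) = exp (-c * x) * (m * (1 + x)) ^ 2 := by ring
    _ ≤ exp (-c * x) * (2 * exp (c * x)) := by
        gcongr
        exact (pow_le_pow_left₀ (by positivity) hlin 2).trans hquad
    _ = 2 := by rw [neg_mul, exp_neg]; field_simp

lemma div_pow_le_mul_inv_pow {a x : ℝ} {m n : ℕ} (ha : 0 ≤ a) (hx : 1 ≤ x) (hmn : m ≤ n) :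
    a / x ^ n ≤ a * (x ^ m)⁻¹ := by
  rw [← div_eq_mul_inv]
  exact div_le_div_of_nonneg_left ha (by positivity) (pow_le_pow_right₀ hx hmn)

namespace memOmega

variable {d : ℕ} {γ L A B Vinf Cp Cm : ℝ} {W : ℝ → ℝ}

lemma continuousOn (hW : memOmega d γ L A B Vinf Cp Cm W) : ContinuousOn W (Set.Ici 0) :=
  hW.1.choose_spec.continuousOn

lemma lt_vinf {t : ℝ} (hW : memOmega d γ L A B Vinf Cp Cm W) (ht : 0 ≤ t) : W t < Vinf :=
  (hW.2.2.1 t ht).2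

lemma gamma_pos (hW : memOmega d γ L A B Vinf Cp Cm W) : 0 < γ := by
  linarith [hW.2.1, hW.lt_vinf le_rfl]

lemma sub_le_inv_sq (hW : memOmega d γ L A B Vinf Cp Cm W) (hd : 3 ≤ d) (hCp : 0 < Cp)
    (hA : 0 ≤ A) (hB : 0 ≤ B) (hL : 0 < L) {σ : ℝ} (hσ : 0 ≤ σ) :
    Vinf - W σ ≤ 2 / min 1 Cp ^ 2 * (γ + γ ^ 3 * A) * ((1 + σ) ^ 2)⁻¹ +
      B / L ^ (d - 1) * ((1 + σ / L) ^ 2)⁻¹ := by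
  set K := 2 / min 1 Cp ^ 2
  have hK : 1 ≤ K := by
    have hm : 0 < min 1 Cp := lt_min one_pos hCp
    have : min 1 Cp ^ 2 ≤ 1 := pow_le_one₀ hm.le (min_le_left 1 Cp)
    rw [le_div_iff₀ (by positivity)]
    linarith
  have hγ := hW.gamma_pos
  have hexp : γ * exp (-Cp * σ) ≤ γ * (K * ((1 + σ) ^ 2)⁻¹) :=
    mul_le_mul_of_nonneg_left (exp_neg_mul_le_inv_one_add_sq hCp hσ) hγ.le
  have hpoly : γ ^ 3 * (A / (1 + σ) ^ (d + 2)) ≤ γ ^ 3 * (A * ((1 + σ) ^ 2)⁻¹) :=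
    mul_le_mul_of_nonneg_left (div_pow_le_mul_inv_pow hA (by linarith) (by omega)) (by positivity)
  have hscaled : B / (L ^ (d - 1) * (1 + σ / L) ^ (d - 1)) ≤
      B / L ^ (d - 1) * ((1 + σ / L) ^ 2)⁻¹ := by
    rw [← div_div]
    exact div_pow_le_mul_inv_pow (by positivity) (le_add_of_nonneg_right (by positivity))
      (by omega)
  have hK' : γ ^ 3 * (A * ((1 + σ) ^ 2)⁻¹) ≤ K * (γ ^ 3 * A * ((1 + σ) ^ 2)⁻¹) := by
    rw [← mul_assoc]
    exact le_mul_of_one_le_left (by positivity) hK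
  linarith [hW.2.2.2.1 σ hσ]

end memOmega

/-- Lemma 4.2 of the paper, case `d ≥ 3`: if a molecule hitting the right face of the
body at time `t` had its (modified) first pre-collision at a time `s ≤ t/2` (so that its
horizontal velocity satisfies `ξ₁ = ⟨W⟩_{s,t}`), then
`0 < W(t) - ξ₁ ≤ C (γ + γ³ A_*)/(1+t) + L^{-(d-1)} B_*/(1+t/L)`,
with `C` depending only on `C₊` and `d`. -/
theorem velocity_gap_early_precollision_dim_ge_three
    (d : ℕ) (hd : 3 ≤ d) (Cp : ℝ) (hCp : 0 < Cp) :
    ∃ C : ℝ, 0 < C ∧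
      ∀ V₀ Vinf γ A B L Cm : ℝ, 0 < V₀ → V₀ < Vinf → γ = Vinf - V₀ →
        0 < A → 0 < B → 1 ≤ L → Cp ≤ Cm →
        ∀ W : ℝ → ℝ, memOmega d γ L A B Vinf Cp Cm W →
          ∀ t : ℝ, 0 < t → ∀ s : ℝ, 0 < s → s ≤ t / 2 →
            ∀ ξ₁ : ℝ, ξ₁ = avg W s t → ξ₁ < W t →
              0 < W t - ξ₁ ∧
                W t - ξ₁ ≤ C / (1 + t) * (γ + γ ^ 3 * A) +
                  B / (L ^ (d - 1) * (1 + t / L)) := by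
  refine ⟨2 / min 1 Cp ^ 2, by positivity, ?_⟩
  rintro V₀ Vinf γ A B L Cm - - - hA hB hL - W hW t ht s hs hst ξ₁ rfl hlt
  refine ⟨sub_pos.2 hlt, ?_⟩
  have hst' : s < t := by linarith
  have hL0 : 0 < L := by linarith
  have hγ := hW.gamma_pos
  have hWint : IntervalIntegrable W volume s t :=
    (hW.continuousOn.mono fun _ hσ => (le_min hs.le ht.le).trans hσ.1).intervalIntegrable
  have hgap := avg_le_of_le_inv_one_add_sq (f := fun σ => W t - W σ) (by positivity) (by positivity) hL0 hs.le hst' (intervalIntegrable_const.sub hWint)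
    fun σ hσ => (sub_le_sub_right (hW.lt_vinf ht.le).le _).trans
      (hW.sub_le_inv_sq hd hCp hA.le hB.le hL0 (hs.le.trans hσ.1))
  rw [avg_sub intervalIntegrable_const hWint, avg_const _ hst'.ne] at hgap
  calc W t - avg W s t ≤ _ := hgap
    _ = _ := by rw [← div_div, div_eq_mul_inv (B / _)]; ring
end

section
/- Let $d \ge 2$, $R > 0$, $L > 0$, $t > 0$, let $W : [0,\infty) \to \mathbb{R}$ be continuous with $V_\infty/2 \le W(\sigma) < V_\infty$ for all $\sigma \ge 0$, and set $X(t) = L + \int_0^t W(\sigma) \, d\sigma$. Let $\xi_1 \in \mathbb{R}$ and $x_\perp, \xi_\perp \in \mathbb{R}^{d-1}$ satisfy: (i) $|x_\perp| \le R/2$, (ii) $|\xi_\perp| \le \frac{R(\xi_1 + V_\infty/2)}{4(L + V_\infty t)}$, and (iii) $\xi_1 \ge \frac{3}{2} V_\infty + \frac{2L}{t}$. Then the set $S = \{ s \in (0, t) : \xi_1 + \langle W \rangle_{s,t} = 2 X(t)/(t-s) \}$ is nonempty, its supremum $\sigma_2$ belongs to $S$, and $|x_\perp - (t - \sigma_2)\xi_\perp|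 < R$. -/
open MeasureTheory Real

/-!
Multiplying by `t - s`, the defining equation of `S` says that
`f s = ξ₁ (t - s) + ∫_s^t W - 2 X(t)` vanishes. Since `W < V∞` and `ξ₁ t ≥ (3/2) V∞ t + 2L`,
`f 0 > 0`, while `f t = -2 X(t) < 0`; so `f` has zeros in `(0, t)`, and as its zero set is closed
and avoids `t`, the largest one `σ₂` lies in `S`. Because `W ≥ V∞/2`, the equation `f σ₂ = 0`
gives `(ξ₁ + V∞/2)(t - σ₂) ≤ 2 X(t) < 2 (L + V∞ t)`, which by (ii) makes `(t - σ₂) |ξ⊥| < R/2`,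
and (i) concludes.
-/

open Set

theorem nonempty_and_csSup_mem_of_sign_change {f : ℝ → ℝ} {a b : ℝ} (hab : a ≤ b)
    (hf : ContinuousOn f (Icc a b)) (ha : 0 < f a) (hb : f b < 0) :
    {s | s ∈ Ioo a b ∧ f s = 0}.Nonempty ∧ sSup {s | s ∈ Ioo a b ∧ f s = 0} ∈
      {s | s ∈ Ioo a b ∧ f s = 0} := by
  set Z := {s | s ∈ Ioo a b ∧ f s = 0}
  obtain ⟨s, ⟨has, hsb⟩, hfs⟩ := intermediate_value_Icc' hab hf ⟨hb.le, ha.le⟩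
  have hsZ : s ∈ Z :=
    ⟨⟨has.lt_of_ne (by rintro rfl; linarith), hsb.lt_of_ne (by rintro rfl; linarith)⟩, hfs⟩
  have hbdd : BddAbove Z := ⟨b, fun x hx => hx.1.2.le⟩
  have hclosed : IsClosed (Icc a b ∩ f ⁻¹' {0}) :=
    hf.preimage_isClosed_of_isClosed isClosed_Icc isClosed_singleton
  have hsub : Z ⊆ Icc a b ∩ f ⁻¹' {0} := fun x hx => ⟨Ioo_subset_Icc_self hx.1, hx.2⟩
  obtain ⟨⟨-, hsup_b⟩, hsup_zero⟩ :=
    hclosed.closure_subset_iff.2 hsub (csSup_mem_closure ⟨s, hsZ⟩ hbdd)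
  refine ⟨⟨s, hsZ⟩, ⟨?_, hsup_b.lt_of_ne ?_⟩, hsup_zero⟩
  · exact hsZ.1.1.trans_le (le_csSup hbdd hsZ)
  · rintro hsup_eq
    rw [mem_preimage, hsup_eq, mem_singleton_iff] at hsup_zero
    linarith

theorem mul_sub_le_intervalIntegral_of_le {f : ℝ → ℝ} {a b m : ℝ} (hab : a ≤ b)
    (hf : IntervalIntegrable f volume a b) (hm : ∀ x ∈ Icc a b, m ≤ f x) :
    m * (b - a) ≤ ∫ x in a..b, f x := by
  simpa [mul_comm] using intervalIntegral.integral_mono_on hab intervalIntegrable_const hf hm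

theorem intervalIntegral_lt_mul_sub_of_lt {f : ℝ → ℝ} {a b M : ℝ} (hab : a < b)
    (hf : ContinuousOn f (Icc a b)) (hM : ∀ x ∈ Icc a b, f x < M) :
    ∫ x in a..b, f x < M * (b - a) := by
  simpa [mul_comm] using intervalIntegral.integral_lt_integral_of_continuousOn_of_le_of_exists_lt
    hab hf continuousOn_const (fun x hx => (hM x (Ioc_subset_Icc_self hx)).le)
    ⟨a, left_mem_Icc.2 hab.le, hM a (left_mem_Icc.2 hab.le)⟩

theorem le_avg_of_forall_le {W : ℝ → ℝ} {s t m : ℝ} (hst : s < t)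
    (hW : IntervalIntegrable W volume s t) (hm : ∀ σ ∈ Icc s t, m ≤ W σ) : m ≤ avg W s t := by
  rw [avg, inv_mul_eq_div, le_div_iff₀ (sub_pos.2 hst)]
  exact mul_sub_le_intervalIntegral_of_le hst.le hW hm

theorem continuousOn_intervalIntegral_left {f : ℝ → ℝ} {a b : ℝ} (hab : a ≤ b)
    (hf : ContinuousOn f (Icc a b)) : ContinuousOn (fun s => ∫ x in s..b, f x) (Icc a b) := by
  rw [← uIcc_of_le hab] at hf ⊢
  exact intervalIntegral.continuousOn_primitive_interval_left hf.integrableOn_uIcc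

theorem add_avg_eq_div_iff (W : ℝ → ℝ) {s t ξ c : ℝ} (hst : s < t) :
    ξ + avg W s t = c / (t - s) ↔ ξ * (t - s) + ∫ σ in s..t, W σ = c := by
  have hts : t - s ≠ 0 := (sub_pos.2 hst).ne'
  rw [avg, eq_div_iff hts, add_mul, mul_comm _ (∫ σ in s..t, W σ), inv_mul_cancel_right₀ hts]

theorem norm_sub_smul_lt {E : Type*} [SeminormedAddCommGroup E] [NormedSpace ℝ E] {x v : E}
    {τ R : ℝ} (hτ : 0 ≤ τ) (hx : ‖x‖ ≤ R / 2) (hv : τ * ‖v‖ < R / 2) : ‖x - τ • v‖ < R :=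
  calc ‖x - τ • v‖ ≤ ‖x‖ + ‖τ • v‖ := norm_sub_le _ _
    _ = ‖x‖ + τ * ‖v‖ := by rw [norm_smul, Real.norm_of_nonneg hτ]
    _ < R := by linarith

theorem nonempty_and_csSup_mem_setOf_add_avg_eq {W : ℝ → ℝ} {a t ξ c : ℝ} (hat : a < t)
    (hW : ContinuousOn W (Icc a t)) (hc_lt : c < ξ * (t - a) + ∫ σ in a..t, W σ) (hc : 0 < c) :
    {s | s ∈ Ioo a t ∧ ξ + avg W s t = c / (t - s)}.Nonempty ∧
      sSup {s | s ∈ Ioo a t ∧ ξ + avg W s t = c / (t - s)} ∈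
        {s | s ∈ Ioo a t ∧ ξ + avg W s t = c / (t - s)} := by
  set f : ℝ → ℝ := fun s => ξ * (t - s) + (∫ σ in s..t, W σ) - c
  have hS : {s | s ∈ Ioo a t ∧ ξ + avg W s t = c / (t - s)} = {s | s ∈ Ioo a t ∧ f s = 0} := by
    ext s
    exact and_congr_right fun hs => (add_avg_eq_div_iff W hs.2).trans sub_eq_zero.symm
  have hf : ContinuousOn f (Icc a t) :=
    ((continuousOn_const.mul (continuousOn_const.sub continuousOn_id)).add
      (continuousOn_intervalIntegral_left hat.le hW)).sub continuousOn_const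
  have hfa : 0 < f a := sub_pos.2 hc_lt
  have hft : f t < 0 := by simpa [f] using hc
  rw [hS]
  exact nonempty_and_csSup_mem_of_sign_change hat.le hf hfa hft

theorem precollision_sufficient_condition_general
    (d : ℕ) (Vinf : ℝ) (hVinf : 0 < Vinf)
    (R : ℝ) (hR : 0 < R) (L : ℝ) (hL : 0 < L) (t : ℝ) (ht : 0 < t)
    (W : ℝ → ℝ) (hWcont : ContinuousOn W (Set.Ici 0))
    (hWbound : ∀ σ : ℝ, 0 ≤ σ → Vinf / 2 ≤ W σ ∧ W σ < Vinf)
    (ξ₁ : ℝ) (xperp ξperp : EuclideanSpace ℝ (Fin (d - 1)))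
    (hx : ‖xperp‖ ≤ R / 2)
    (hξperp : ‖ξperp‖ ≤ R * (ξ₁ + Vinf / 2) / (4 * (L + Vinf * t)))
    (hξ₁ : 3 / 2 * Vinf + 2 * L / t ≤ ξ₁) :
    (let X : ℝ := L + ∫ σ in (0:ℝ)..t, W σ
     let S : Set ℝ := {s | s ∈ Set.Ioo 0 t ∧ ξ₁ + avg W s t = 2 * X / (t - s)}
     S.Nonempty ∧ sSup S ∈ S ∧ ‖xperp - (t - sSup S) • ξperp‖ < R) := by
  intro X S
  have hW : ContinuousOn W (Icc 0 t) := hWcont.mono Icc_subset_Ici_self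
  have hW_int (s : ℝ) (hs : s ∈ Icc 0 t) : IntervalIntegrable W volume s t :=
    (hW.mono (Icc_subset_Icc_left hs.1)).intervalIntegrable_of_Icc hs.2
  have hW_low (s : ℝ) (hs : 0 ≤ s) : ∀ σ ∈ Icc s t, Vinf / 2 ≤ W σ :=
    fun σ hσ => (hWbound σ (hs.trans hσ.1)).1
  have hX : 0 < X ∧ X < L + Vinf * t := by
    have := mul_sub_le_intervalIntegral_of_le ht.le (hW_int 0 (left_mem_Icc.2 ht.le))
      (hW_low 0 le_rfl)
    have := intervalIntegral_lt_mul_sub_of_lt ht hW fun σ hσ => (hWbound σ hσ.1).2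
    constructor <;> nlinarith
  have hc_lt : 2 * X < ξ₁ * (t - 0) + ∫ σ in (0:ℝ)..t, W σ := by
    have : 3 / 2 * Vinf * t + 2 * L ≤ ξ₁ * t := by
      have := mul_le_mul_of_nonneg_right hξ₁ ht.le
      rwa [add_mul, div_mul_cancel₀ _ ht.ne'] at this
    have hX_def : X = L + ∫ σ in (0:ℝ)..t, W σ := rfl
    rw [sub_zero]
    nlinarith
  obtain ⟨hne, hmem⟩ := nonempty_and_csSup_mem_setOf_add_avg_eq ht hW hc_lt (by linarith)
  refine ⟨hne, hmem, ?_⟩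
  obtain ⟨⟨hσ0, hσt⟩, hσ⟩ := hmem
  have hτ : 0 < t - sSup S := sub_pos.2 hσt
  have hkey : (ξ₁ + Vinf / 2) * (t - sSup S) ≤ 2 * X := by
    rw [← le_div_iff₀ hτ, ← hσ]
    exact add_le_add_right (le_avg_of_forall_le hσt (hW_int _ ⟨hσ0.le, hσt.le⟩)
      (hW_low _ hσ0.le)) ξ₁
  refine norm_sub_smul_lt hτ.le hx ?_
  calc (t - sSup S) * ‖ξperp‖
      ≤ (t - sSup S) * (R * (ξ₁ + Vinf / 2) / (4 * (L + Vinf * t))) := by gcongr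
    _ < R / 2 := by
      rw [mul_div_assoc', div_lt_iff₀ (by positivity)]
      nlinarith

/-- Lemma 4.5 of the paper (sufficient condition for a wall-mediated pre-collision):
under the conditions (i) `|x⊥| ≤ R/2`, (ii) `|ξ⊥| ≤ R(ξ₁ + V∞/2)/(4(L + V∞ t))` and
(iii) `ξ₁ ≥ (3/2)V∞ + 2L/t`, the set of pre-collision times
`S = { s ∈ (0,t) : ξ₁ + ⟨W⟩_{s,t} = 2X(t)/(t-s) }` is nonempty, its supremum `σ₂`
belongs to `S`, and `|x⊥ - (t - σ₂) ξ⊥| < R`. -/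
theorem precollision_sufficient_condition
    (d : ℕ) (hd : 2 ≤ d) (Vinf : ℝ) (hVinf : 0 < Vinf)
    (R : ℝ) (hR : 0 < R) (L : ℝ) (hL : 0 < L) (t : ℝ) (ht : 0 < t)
    (W : ℝ → ℝ) (hWcont : ContinuousOn W (Set.Ici 0))
    (hWbound : ∀ σ : ℝ, 0 ≤ σ → Vinf / 2 ≤ W σ ∧ W σ < Vinf)
    (ξ₁ : ℝ) (xperp ξperp : EuclideanSpace ℝ (Fin (d - 1)))
    (hx : ‖xperp‖ ≤ R / 2)
    (hξperp : ‖ξperp‖ ≤ R * (ξ₁ + Vinf / 2) / (4 * (L + Vinf * t)))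
    (hξ₁ : 3 / 2 * Vinf + 2 * L / t ≤ ξ₁) :
    (let X : ℝ := L + ∫ σ in (0:ℝ)..t, W σ
     let S : Set ℝ := {s | s ∈ Set.Ioo 0 t ∧ ξ₁ + avg W s t = 2 * X / (t - s)}
     S.Nonempty ∧ sSup S ∈ S ∧ ‖xperp - (t - sSup S) • ξperp‖ < R) :=
  precollision_sufficient_condition_general d Vinf hVinf R hR L hL t ht W hWcont hWbound ξ₁ xperp
    ξperp hx hξperp hξ₁
end

section
/- Let $0 \le a < b$, let $W : [a, b] \to \mathbb{R}$ be continuous, and let $\xi \in \mathbb{R}$ satisfy $\xi = \frac{1}{b-a} \int_a^b W(\sigma) \, d\sigma$ and $(b - s)\xi < \int_s^b W(\sigma) \, d\sigma$ for every $s \in (a, b)$. Then $W(a) \le \xi$. -/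
/-! If `W a > ξ`, continuity makes the average of `W` over a short interval `[a, s]` exceed `ξ`;
since the average over `[a, b]` is exactly `ξ`, the average over `[s, b]` is then below `ξ`,
contradicting the hypothesis at `s`. -/

open MeasureTheory Real Set Filter Topology

theorem exists_mem_Ioo_sub_mul_lt_intervalIntegral {f : ℝ → ℝ} {a b c : ℝ} (hab : a < b)
    (hf : ContinuousOn f (Icc a b)) (hc : c < f a) :
    ∃ s ∈ Ioo a b, (s - a) * c < ∫ σ in a..s, f σ := by
  have hnear : ∀ᶠ σ in 𝓝[≥] a, c < f σ ∧ σ < b := by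
    have hfa := (hf a (left_mem_Icc.2 hab.le)).eventually_const_lt hc
    rw [nhdsWithin_Icc_eq_nhdsGE hab] at hfa
    exact hfa.and (mem_of_superset (Ico_mem_nhdsGE hab) fun _ h ↦ h.2)
  obtain ⟨s, has, hsub⟩ := mem_nhdsGE_iff_exists_Icc_subset.1 hnear
  have hsb : s < b := (hsub (right_mem_Icc.2 has.le)).2
  refine ⟨s, ⟨has, hsb⟩, ?_⟩
  have hlt := intervalIntegral.integral_lt_integral_of_continuousOn_of_le_of_exists_lt has
    continuousOn_const (hf.mono (Icc_subset_Icc le_rfl hsb.le))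
    (fun σ hσ ↦ (hsub (Ioc_subset_Icc_self hσ)).1.le)
    ⟨a, left_mem_Icc.2 has.le, (hsub (left_mem_Icc.2 has.le)).1⟩
  simpa only [intervalIntegral.integral_const, smul_eq_mul] using hlt

theorem body_velocity_le_molecule_velocity_general
    (a b : ℝ) (hab : a < b) (W : ℝ → ℝ)
    (hW : ContinuousOn W (Set.Icc a b)) (ξ : ℝ)
    (hξ : ξ = (b - a)⁻¹ * ∫ σ in a..b, W σ)
    (hsup : ∀ s : ℝ, a < s → s < b → (b - s) * ξ < ∫ σ in s..b, W σ) :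
    W a ≤ ξ := by
  by_contra! hξW
  obtain ⟨s, ⟨has, hsb⟩, hs⟩ := exists_mem_Ioo_sub_mul_lt_intervalIntegral hab hW hξW
  have hsplit : (∫ σ in a..s, W σ) + ∫ σ in s..b, W σ = ∫ σ in a..b, W σ :=
    intervalIntegral.integral_add_adjacent_intervals
      ((hW.mono (Icc_subset_Icc le_rfl hsb.le)).intervalIntegrable_of_Icc has.le)
      ((hW.mono (Icc_subset_Icc has.le le_rfl)).intervalIntegrable_of_Icc hsb.le)
  have htotal : ∫ σ in a..b, W σ = (b - a) * ξ := by
    rw [hξ, mul_inv_cancel_left₀ (sub_ne_zero.2 hab.ne')]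
  linarith [hsup s has hsb]

/-- The key step in the proof of non-negativity of the recollision term `r_W⁺`
(Proposition 4.4): if `ξ = (b-a)⁻¹ ∫_a^b W` and `(b-s)ξ < ∫_s^b W` for every
`s ∈ (a,b)`, then `W(a) ≤ ξ`. -/
theorem body_velocity_le_molecule_velocity
    (a b : ℝ) (ha : 0 ≤ a) (hab : a < b) (W : ℝ → ℝ)
    (hW : ContinuousOn W (Set.Icc a b)) (ξ : ℝ)
    (hξ : ξ = (b - a)⁻¹ * ∫ σ in a..b, W σ)
    (hsup : ∀ s : ℝ, a < s → s < b → (b - s) * ξ < ∫ σ in s..b, W σ) :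
    W a ≤ ξ :=
  body_velocity_le_molecule_velocity_general a b hab W hW ξ hξ hsup
end

section
/- Let $d \ge 2$ be an integer and $0 < C_+ \le C_-$. There exists a constant $C > 0$ depending only on $C_+$ and $d$ such that the following holds: for all $\gamma > 0$, $L \ge 1$, $a_1, a_2 \ge 0$, every measurable $K : [0,\infty) \to [C_+, C_-]$, and every measurable $r : [0,\infty) \to [0,\infty)$ with $r(s) \le a_1 (1+s)^{-(d+2)} + a_2 (1 + s/L)^{-(d-1)}$ for all $s \ge 0$, the function $u(t) = \gamma e^{-\int_0^t K(\sigma) d\sigma} + \int_0^t e^{-\int_s^t K(\sigma) d\sigma} r(s) \, ds$ satisfies $u(t) \le \gamma e^{-C_+ t} + C a_1 (1+t)^{-(d+2)} + C a_2 (1 + t/L)^{-(d-1)}$ for all $t \ge 0$. -/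
open MeasureTheory Real

/-! Since `K ≥ C₊`, the propagator `exp (-∫ₛᵗ K)` is at most `exp (-C₊ (t - s))`, which already
bounds the free term. For the source term, the weights `(1 + s / L)^(-p)` are almost non-increasing:
`1 + t / L ≤ (1 + (t - s)) (1 + s / L)` when `L ≥ 1`, so replacing the weight at the source time `s`
by the weight at the current time `t` costs a factor `(1 + (t - s))^p ≤ M exp (C₊ (t - s) / 2)`.
The remaining decay `exp (-C₊ (t - s) / 2)` integrates to at most `2 / C₊`. -/

open Nat intervalIntegral Set

lemma one_add_pow_le_mul_exp (p : ℕ) {c x : ℝ} (hc : 0 < c) (hx : 0 ≤ x) :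
    (1 + x) ^ p ≤ p ! * exp c / c ^ p * exp (c * x) := by
  have h := pow_div_factorial_le_exp _ (mul_nonneg hc.le (by linarith : (0:ℝ) ≤ 1 + x)) p
  rw [mul_pow, mul_add, mul_one, exp_add, div_le_iff₀ (by positivity)] at h
  rw [div_mul_eq_mul_div, le_div_iff₀ (by positivity)]
  linarith

lemma one_add_div_le_mul_one_add_div {L s t : ℝ} (hL : 1 ≤ L) (hs : 0 ≤ s) (hst : s ≤ t) :
    1 + t / L ≤ (1 + (t - s)) * (1 + s / L) := by
  have hsL : 0 ≤ s / L := by positivity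
  have : (t - s) / L ≤ t - s := div_le_self (by linarith) hL
  have : t / L = s / L + (t - s) / L := by ring
  nlinarith [mul_nonneg (sub_nonneg.2 hst) hsL]

lemma exists_exp_neg_mul_div_one_add_pow_le (p : ℕ) {c : ℝ} (hc : 0 < c) :
    ∃ M > 0, ∀ L s t : ℝ, 1 ≤ L → 0 ≤ s → s ≤ t →
      exp (-(c * (t - s))) / (1 + s / L) ^ p ≤ M / (1 + t / L) ^ p * exp (-(c / 2 * (t - s))) := by
  set M := p ! * exp (c / 2) / (c / 2) ^ p
  refine ⟨M, by positivity, fun L s t hL hs hst => ?_⟩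
  have hL0 : 0 < L := by linarith
  have ht0 : 0 ≤ t := hs.trans hst
  have hweight : (1 + t / L) ^ p ≤ M * exp (c / 2 * (t - s)) * (1 + s / L) ^ p :=
    calc (1 + t / L) ^ p ≤ (1 + (t - s)) ^ p * (1 + s / L) ^ p := by
          rw [← mul_pow]; gcongr; exact one_add_div_le_mul_one_add_div hL hs hst
      _ ≤ M * exp (c / 2 * (t - s)) * (1 + s / L) ^ p := by
          gcongr; exact one_add_pow_le_mul_exp p (by positivity) (by linarith)
  have hexp : exp (-(c * (t - s))) * exp (c / 2 * (t - s)) = exp (-(c / 2 * (t - s))) := by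
    rw [← exp_add]; ring_nf
  rw [div_le_iff₀ (by positivity), div_mul_eq_mul_div, div_mul_eq_mul_div,
    le_div_iff₀ (by positivity)]
  calc exp (-(c * (t - s))) * (1 + t / L) ^ p
      ≤ exp (-(c * (t - s))) * (M * exp (c / 2 * (t - s)) * (1 + s / L) ^ p) := by gcongr
    _ = M * exp (-(c / 2 * (t - s))) * (1 + s / L) ^ p := by rw [← hexp]; ring

lemma exp_neg_integral_le {K : ℝ → ℝ} {c s t : ℝ} (hK : IntervalIntegrable K volume s t)
    (hcK : ∀ σ, c ≤ K σ) (hst : s ≤ t) :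
    exp (-∫ σ in s..t, K σ) ≤ exp (-(c * (t - s))) := by
  have := integral_mono_on hst intervalIntegrable_const hK fun σ _ => hcK σ
  rw [intervalIntegral.integral_const, smul_eq_mul] at this
  gcongr
  linarith

lemma integral_exp_neg_mul_sub_le {c : ℝ} (hc : 0 < c) (t : ℝ) :
    ∫ s in (0:ℝ)..t, exp (-(c * (t - s))) ≤ c⁻¹ := by
  have : ∀ s, -(c * (t - s)) = c * s - c * t := fun s => by ring
  simp_rw [this, integral_comp_mul_sub (fun x => exp x) hc.ne', integral_exp, smul_eq_mul]
  have := exp_pos (c * 0 - c * t)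
  rw [sub_self, exp_zero]
  nlinarith [inv_pos.2 hc]

lemma continuous_integral_lower_limit {K : ℝ → ℝ} (hK : ∀ a b, IntervalIntegrable K volume a b)
    (t : ℝ) : Continuous fun s => ∫ σ in s..t, K σ := by
  simp_rw [integral_symm t]
  exact (continuous_primitive hK t).neg

lemma integral_duhamel_le_of_le_mul_exp {K r : ℝ → ℝ} {c c' B t : ℝ}
    (hK : ∀ a b, IntervalIntegrable K volume a b) (hcK : ∀ σ, c ≤ K σ) (hr : Measurable r)
    (hr0 : ∀ s, 0 ≤ r s) (hc' : 0 < c')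
    (hrB : ∀ s ∈ Icc 0 t, exp (-(c * (t - s))) * r s ≤ B * exp (-(c' * (t - s)))) (ht : 0 ≤ t) :
    ∫ s in (0:ℝ)..t, exp (-∫ σ in s..t, K σ) * r s ≤ B / c' := by
  have hB : 0 ≤ B := by
    have := hrB t ⟨ht, le_rfl⟩
    simp only [sub_self, mul_zero, neg_zero, exp_zero, one_mul, mul_one] at this
    linarith [hr0 t]
  have hpt : ∀ s ∈ Icc 0 t, exp (-∫ σ in s..t, K σ) * r s ≤ B * exp (-(c' * (t - s))) :=
    fun s hs => (mul_le_mul_of_nonneg_right (exp_neg_integral_le (hK s t) hcK hs.2) (hr0 s)).trans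
      (hrB s hs)
  have hmaj : IntervalIntegrable (fun s => B * exp (-(c' * (t - s)))) volume 0 t :=
    Continuous.intervalIntegrable (by fun_prop) _ _
  have hmeas : Measurable fun s => exp (-∫ σ in s..t, K σ) * r s :=
    (continuous_integral_lower_limit hK t).neg.rexp.measurable.mul hr
  have hint : IntervalIntegrable (fun s => exp (-∫ σ in s..t, K σ) * r s) volume 0 t := by
    refine hmaj.mono_fun' hmeas.aestronglyMeasurable.restrict ?_
    rw [uIoc_of_le ht]
    filter_upwards [ae_restrict_mem measurableSet_Ioc] with s hs
    rw [norm_of_nonneg (mul_nonneg (exp_pos _).le (hr0 s))]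
    exact hpt s (Ioc_subset_Icc_self hs)
  calc ∫ s in (0:ℝ)..t, exp (-∫ σ in s..t, K σ) * r s
      ≤ ∫ s in (0:ℝ)..t, B * exp (-(c' * (t - s))) := integral_mono_on ht hint hmaj hpt
    _ = B * ∫ s in (0:ℝ)..t, exp (-(c' * (t - s))) := intervalIntegral.integral_const_mul _ _
    _ ≤ B * c'⁻¹ := by gcongr; exact integral_exp_neg_mul_sub_le hc' t
    _ = B / c' := (div_eq_mul_inv B c').symm

lemma exists_exp_neg_mul_mul_le_of_le_two_weights (p q : ℕ) {c : ℝ} (hc : 0 < c) :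
    ∃ M > 0, ∀ L a₁ a₂ ρ s t : ℝ, 1 ≤ L → 0 ≤ a₁ → 0 ≤ a₂ → 0 ≤ s → s ≤ t →
      ρ ≤ a₁ / (1 + s) ^ p + a₂ / (1 + s / L) ^ q →
      exp (-(c * (t - s))) * ρ ≤
        M * (a₁ / (1 + t) ^ p + a₂ / (1 + t / L) ^ q) * exp (-(c / 2 * (t - s))) := by
  obtain ⟨M₁, hM₁, hw₁⟩ := exists_exp_neg_mul_div_one_add_pow_le p hc
  obtain ⟨M₂, hM₂, hw₂⟩ := exists_exp_neg_mul_div_one_add_pow_le q hc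
  refine ⟨max M₁ M₂, lt_max_of_lt_left hM₁, fun L a₁ a₂ ρ s t hL ha₁ ha₂ hs hst hρ => ?_⟩
  have h₁ := hw₁ 1 s t le_rfl hs hst
  simp only [div_one] at h₁
  have h₂ := hw₂ L s t hL hs hst
  have ht : 0 ≤ t := hs.trans hst
  calc exp (-(c * (t - s))) * ρ
      ≤ exp (-(c * (t - s))) * (a₁ / (1 + s) ^ p + a₂ / (1 + s / L) ^ q) := by gcongr
    _ = a₁ * (exp (-(c * (t - s))) / (1 + s) ^ p) +
          a₂ * (exp (-(c * (t - s))) / (1 + s / L) ^ q) := by ring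
    _ ≤ a₁ * (max M₁ M₂ / (1 + t) ^ p * exp (-(c / 2 * (t - s)))) +
          a₂ * (max M₁ M₂ / (1 + t / L) ^ q * exp (-(c / 2 * (t - s)))) := by
        gcongr
        · exact h₁.trans (by gcongr; exact le_max_left M₁ M₂)
        · exact h₂.trans (by gcongr; exact le_max_right M₁ M₂)
    _ = _ := by ring

theorem duhamel_upper_bound_general (d : ℕ) (Cp Cm : ℝ)
    (hCp : 0 < Cp) :
    ∃ C : ℝ, 0 < C ∧
      ∀ γ L a₁ a₂ : ℝ, 0 < γ → 1 ≤ L → 0 ≤ a₁ → 0 ≤ a₂ →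
        ∀ K r : ℝ → ℝ, Measurable K → (∀ t : ℝ, Cp ≤ K t ∧ K t ≤ Cm) →
          Measurable r → (∀ t : ℝ, 0 ≤ r t) →
          (∀ s : ℝ, 0 ≤ s →
            r s ≤ a₁ / (1 + s) ^ (d + 2) + a₂ / (1 + s / L) ^ (d - 1)) →
          ∀ t : ℝ, 0 ≤ t →
            γ * Real.exp (-(∫ σ in (0:ℝ)..t, K σ)) +
                (∫ s in (0:ℝ)..t, Real.exp (-(∫ σ in s..t, K σ)) * r s) ≤
              γ * Real.exp (-Cp * t) + C * (a₁ / (1 + t) ^ (d + 2)) +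
                C * (a₂ / (1 + t / L) ^ (d - 1)) := by
  obtain ⟨M, hM, hsource⟩ := exists_exp_neg_mul_mul_le_of_le_two_weights (d + 2) (d - 1) hCp
  refine ⟨M / (Cp / 2), by positivity, ?_⟩
  intro γ L a₁ a₂ hγ hL ha₁ ha₂ K r hKm hKb hrm hr0 hrb t ht
  have hK (a b : ℝ) : IntervalIntegrable K volume a b :=
    intervalIntegrable_const.mono_fun' hKm.aestronglyMeasurable.restrict <| ae_of_all _ fun σ =>
      abs_le.2 ⟨by linarith [hKb σ], (hKb σ).2⟩
  have hfree := exp_neg_integral_le (hK 0 t) (fun σ => (hKb σ).1) ht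
  rw [sub_zero, ← neg_mul] at hfree
  have hduhamel := integral_duhamel_le_of_le_mul_exp hK (fun σ => (hKb σ).1) hrm hr0
    (by positivity) (fun s hs => hsource L a₁ a₂ (r s) s t hL ha₁ ha₂ hs.1 hs.2 (hrb s hs.1)) ht
  calc _ ≤ γ * exp (-Cp * t) +
        M * (a₁ / (1 + t) ^ (d + 2) + a₂ / (1 + t / L) ^ (d - 1)) / (Cp / 2) := by gcongr
    _ = _ := by ring

/-- Upper-bound half of Proposition 4.8: there is a constant `C` depending only on
`C₊` and `d` such that the Duhamel representation
`u(t) = γ e^{-∫_0^t K} + ∫_0^t e^{-∫_s^t K} r(s) ds` of `u' = -K u + r`, `u(0) = γ`,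
with `C₊ ≤ K ≤ C₋` and `0 ≤ r(s) ≤ a₁(1+s)^{-(d+2)} + a₂(1+s/L)^{-(d-1)}`, satisfies
`u(t) ≤ γ e^{-C₊ t} + C a₁ (1+t)^{-(d+2)} + C a₂ (1+t/L)^{-(d-1)}`. -/
theorem duhamel_upper_bound (d : ℕ) (hd : 2 ≤ d) (Cp Cm : ℝ)
    (hCp : 0 < Cp) (hCpm : Cp ≤ Cm) :
    ∃ C : ℝ, 0 < C ∧
      ∀ γ L a₁ a₂ : ℝ, 0 < γ → 1 ≤ L → 0 ≤ a₁ → 0 ≤ a₂ →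
        ∀ K r : ℝ → ℝ, Measurable K → (∀ t : ℝ, Cp ≤ K t ∧ K t ≤ Cm) →
          Measurable r → (∀ t : ℝ, 0 ≤ r t) →
          (∀ s : ℝ, 0 ≤ s →
            r s ≤ a₁ / (1 + s) ^ (d + 2) + a₂ / (1 + s / L) ^ (d - 1)) →
          ∀ t : ℝ, 0 ≤ t →
            γ * Real.exp (-(∫ σ in (0:ℝ)..t, K σ)) +
                (∫ s in (0:ℝ)..t, Real.exp (-(∫ σ in s..t, K σ)) * r s) ≤
              γ * Real.exp (-Cp * t) + C * (a₁ / (1 + t) ^ (d + 2)) +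
                C * (a₂ / (1 + t / L) ^ (d - 1)) :=
  duhamel_upper_bound_general d Cp Cm hCp
end
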